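/- Let A ⊂ ℝ be a finite set with |A| = m ≥ 2 and let s ≥ 1 and n ≥ s² be integers. Then there exists a function F : A^n → {0,1} with deg(F) = (m−1)s² and s(F) = (m−1)s; in particular s(F) = √( (m−1)·deg(F) ), so the lower bound s(f) ≥ √(deg(f)/(m−1)) is tight up to a factor of m−1. -/

import Mathlib

open Finset MvPolynomial

/-- The degree of a function `f` defined on `(Asets 1) × ⋯ × (Asets n) ⊆ ℝⁿ`: the minimum
total degree of a polynomial `p ∈ ℝ[x₁,…,xₙ]` with `p(a) = f(a)` for all `a` in the domain. -/
noncomputable def fdeg {n : ℕ} (Asets : Fin n → Finset ℝ) (f : (Fin n → ℝ) → ℝ) : ℕ :=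
  sInf {k | ∃ p : MvPolynomial (Fin n) ℝ, p.totalDegree = k ∧
    ∀ x : Fin n → ℝ, (∀ i, x i ∈ Asets i) → MvPolynomial.eval x p = f x}

open scoped Classical in
/-- The local sensitivity of `f : Aⁿ → ℝ` at `x`: the number of points `y ∈ Aⁿ` differing
from `x` in exactly one coordinate and satisfying `f y ≠ f x`. -/
noncomputable def locSens {n : ℕ} (A : Finset ℝ) (f : (Fin n → ℝ) → ℝ) (x : Fin n → ℝ) : ℕ :=
  ((Fintype.piFinset fun _ : Fin n => A).filter
    fun y => hammingDist x y = 1 ∧ f y ≠ f x).card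

/-- The sensitivity of `f : Aⁿ → ℝ`: the maximum local sensitivity over all `x ∈ Aⁿ`. -/
noncomputable def sens {n : ℕ} (A : Finset ℝ) (f : (Fin n → ℝ) → ℝ) : ℕ :=
  (Fintype.piFinset fun _ : Fin n => A).sup (locSens A f)

/-!
`F` is the tribes function: an OR of `s` ANDs over disjoint blocks of `s` coordinates, each AND
testing `xᵢ = a` for a fixed `a ∈ A`. At a point with a full block, only the `(m - 1)s` flips
that move a coordinate of that block away from `a` can change `F`; at a point with no full block,
each block can be completed by at most one flip. Hence `s(F) = (m - 1)s`.

Writing each test `xᵢ = a` as a Lagrange basis polynomial of degree `m - 1` gives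
`deg F ≤ (m - 1)s²`. For the converse, let `T` be the `s²` block coordinates and
`w(t) = ∏_{u ≠ t} (t - u)⁻¹` the Lagrange nodal weights of `A`. The functional
`L g = ∑_{x ∈ Aⁿ} ∏_{i ∈ T} w(xᵢ) g(x)`, with the coordinates off `T` pinned to `a`, extracts the
coefficient of `∏_{i ∈ T} xᵢ^(m-1)`, so it kills every polynomial of degree `< (m - 1)s²`.
Inclusion–exclusion over the blocks gives `L F = ±w(a)^(s²) ≠ 0`.
-/

open Lagrange (nodalWeight)

lemma Polynomial.totalDegree_toMvPolynomial_le {R σ : Type*} [CommSemiring R] (p : Polynomial R)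
    (i : σ) : (p.toMvPolynomial i).totalDegree ≤ p.natDegree := by
  conv_lhs => rw [p.as_sum_range_C_mul_X_pow]
  simp only [map_sum, map_mul, map_pow, Polynomial.toMvPolynomial_C, Polynomial.toMvPolynomial_X]
  refine (totalDegree_finsetSum _ _).trans (Finset.sup_le fun k hk => ?_)
  rw [MvPolynomial.C_mul_X_pow_eq_monomial]
  refine (totalDegree_monomial_le _ _).trans ?_
  simpa using Nat.lt_succ_iff.1 (mem_range.1 hk)

section NodalWeight

variable {K : Type*} [Field K] [DecidableEq K] {A : Finset K}

lemma sum_nodalWeight_mul_pow {d : ℕ} (hd : d < #A - 1) :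
    ∑ t ∈ A, nodalWeight A id t * t ^ d = 0 := by
  have hdeg : (Polynomial.X ^ d : Polynomial K).degree < #A := by
    rw [Polynomial.degree_X_pow]; exact_mod_cast (by omega)
  have := Lagrange.coeff_eq_sum (v := id) (Set.injOn_id _) hdeg
  rw [Polynomial.coeff_X_pow, if_neg (by omega)] at this
  simp only [this, Polynomial.eval_pow, Polynomial.eval_X, id, nodalWeight, div_eq_mul_inv,
    prod_inv_distrib, mul_comm]

lemma sum_nodalWeight (hA : 2 ≤ #A) : ∑ t ∈ A, nodalWeight A id t = 0 := by
  simpa using sum_nodalWeight_mul_pow (A := A) (d := 0) (by omega)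

end NodalWeight

lemma exists_lt_of_totalDegree_lt {σ R : Type*} [CommSemiring R] [Fintype σ]
    {p : MvPolynomial σ R} {d : σ →₀ ℕ} (hd : d ∈ p.support) {c : ℕ} {T : Finset σ}
    (hp : p.totalDegree < c * #T) : ∃ i ∈ T, d i < c := by
  by_contra! h
  have := calc c * #T ≤ ∑ i ∈ T, d i := by simpa [mul_comm] using card_nsmul_le_sum T d c h
    _ ≤ ∑ i, d i := sum_le_sum_of_subset (subset_univ T)
    _ ≤ p.totalDegree := by
      simpa [Finsupp.sum_fintype] using le_totalDegree hd
  omega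

section WeightedSum

variable {K ι : Type*} [Field K] [Fintype ι] [DecidableEq ι]

def weightedSum (A : Finset K) (W : ι → K → K) : ((ι → K) → K) →ₗ[K] K where
  toFun g := ∑ x ∈ Fintype.piFinset fun _ => A, (∏ i, W i (x i)) * g x
  map_add' _ _ := by simp only [Pi.add_apply, mul_add, sum_add_distrib]
  map_smul' _ _ := by
    simp only [Pi.smul_apply, smul_eq_mul, mul_sum, RingHom.id_apply, mul_left_comm]

lemma weightedSum_apply (A : Finset K) (W : ι → K → K) (g : (ι → K) → K) :
    weightedSum A W g = ∑ x ∈ Fintype.piFinset fun _ => A, (∏ i, W i (x i)) * g x := rfl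

lemma weightedSum_congr {A : Finset K} {W : ι → K → K} {f g : (ι → K) → K}
    (h : ∀ x, (∀ i, x i ∈ A) → f x = g x) : weightedSum A W f = weightedSum A W g :=
  sum_congr rfl fun x hx => by rw [h x (Fintype.mem_piFinset.1 hx)]

lemma weightedSum_prod (A : Finset K) (W : ι → K → K) (h : ι → K → K) :
    weightedSum A W (fun x => ∏ i, h i (x i)) = ∏ i, ∑ t ∈ A, W i t * h i t := by
  simp only [weightedSum_apply, ← prod_mul_distrib]
  exact sum_prod_piFinset A fun i t => W i t * h i t

lemma weightedSum_prod_mem (A : Finset K) (W : ι → K → K) (U : Finset ι) (h : ι → K → K) :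
    weightedSum A W (fun x => ∏ i ∈ U, h i (x i)) =
      ∏ i, ∑ t ∈ A, W i t * if i ∈ U then h i t else 1 := by
  have hU (x : ι → K) : ∏ i ∈ U, h i (x i) = ∏ i, if i ∈ U then h i (x i) else 1 := by
    rw [prod_ite_mem, univ_inter]
  simp only [hU]
  exact weightedSum_prod A W fun i t => if i ∈ U then h i t else 1

lemma weightedSum_eval_eq_zero [DecidableEq K] {A : Finset K} {W : ι → K → K} {T : Finset ι}
    (hW : ∀ i ∈ T, W i = nodalWeight A id) {p : MvPolynomial ι K}
    (hp : p.totalDegree < (#A - 1) * #T) : weightedSum A W (fun x => eval x p) = 0 := by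
  have hmon : (fun x => eval x p) =
      ∑ d ∈ p.support, p.coeff d • fun x : ι → K => ∏ i, x i ^ d i := by
    ext x; simp [eval_eq', Finset.sum_apply]
  rw [hmon, map_sum]
  refine sum_eq_zero fun d hd => ?_
  obtain ⟨i, hi, hdi⟩ := exists_lt_of_totalDegree_lt hd hp
  rw [map_smul, weightedSum_prod A W fun i t => t ^ d i, prod_eq_zero (mem_univ i), smul_zero]
  rw [hW i hi]
  exact sum_nodalWeight_mul_pow hdi

end WeightedSum

lemma totalDegree_one_sub_prod_le {R σ ι : Type*} [CommRing R] {s : Finset ι}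
    {f : ι → MvPolynomial σ R} {d : ℕ} (hf : ∀ i ∈ s, (f i).totalDegree ≤ d) :
    (1 - ∏ i ∈ s, f i).totalDegree ≤ #s * d := by
  refine (totalDegree_sub _ _).trans (max_le (by simp) ((totalDegree_finsetProd _ _).trans ?_))
  simpa using sum_le_sum hf

lemma eval_basis_id {K : Type*} [Field K] [DecidableEq K] {A : Finset K} {a t : K} (ha : a ∈ A)
    (ht : t ∈ A) : (Lagrange.basis A id a).eval t = if t = a then 1 else 0 := by
  split_ifs with h
  · subst h; exact Lagrange.eval_basis_self (v := id) (Set.injOn_id _) ha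
  · exact Lagrange.eval_basis_of_ne (v := id) (Ne.symm h) ht

section Tribes

variable {K ι κ τ : Type*} [Field K] [DecidableEq K] [Fintype κ] [Fintype τ]

def tribes (e : κ × τ ↪ ι) (a : K) (x : ι → K) : K :=
  if ∃ j, ∀ r, x (e (j, r)) = a then 1 else 0

lemma tribes_eq_one_sub_prod (e : κ × τ ↪ ι) (a : K) (x : ι → K) :
    tribes e a x = 1 - ∏ j, (1 - ∏ r, if x (e (j, r)) = a then 1 else 0) := by
  unfold tribes
  split_ifs with h
  · obtain ⟨j, hj⟩ := h
    rw [prod_eq_zero (mem_univ j) (by simp [hj]), sub_zero]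
  · simp only [not_exists, not_forall] at h
    rw [prod_eq_one fun j _ => ?_, sub_self]
    obtain ⟨r, hr⟩ := h j
    rw [prod_eq_zero (mem_univ r) (if_neg hr), sub_zero]

lemma tribes_eq_zero_or_eq_one (e : κ × τ ↪ ι) (a : K) (x : ι → K) :
    tribes e a x = 0 ∨ tribes e a x = 1 := by
  unfold tribes; split_ifs <;> simp

lemma tribes_eq_one_iff (e : κ × τ ↪ ι) (a : K) (x : ι → K) :
    tribes e a x = 1 ↔ ∃ j, ∀ r, x (e (j, r)) = a := by
  simp [tribes]

noncomputable def tribesPoly (A : Finset K) (e : κ × τ ↪ ι) (a : K) : MvPolynomial ι K :=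
  1 - ∏ j, (1 - ∏ r, (Lagrange.basis A id a).toMvPolynomial (e (j, r)))

lemma eval_tribesPoly {A : Finset K} (e : κ × τ ↪ ι) {a : K} (ha : a ∈ A) {x : ι → K}
    (hx : ∀ i, x i ∈ A) : eval x (tribesPoly A e a) = tribes e a x := by
  simp only [tribesPoly, tribes_eq_one_sub_prod, map_sub, map_one, map_prod, eval_toMvPolynomial,
    eval_basis_id ha (hx _)]

lemma totalDegree_tribesPoly_le {A : Finset K} (e : κ × τ ↪ ι) {a : K} (ha : a ∈ A) :
    (tribesPoly A e a).totalDegree ≤ (#A - 1) * (Fintype.card κ * Fintype.card τ) := by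
  have hbasis (i : ι) : ((Lagrange.basis A id a).toMvPolynomial i).totalDegree ≤ #A - 1 :=
    (Polynomial.totalDegree_toMvPolynomial_le _ _).trans
      (Lagrange.natDegree_basis (Set.injOn_id _) ha).le
  have := totalDegree_one_sub_prod_le (s := univ) fun j _ =>
    totalDegree_one_sub_prod_le (s := univ) fun r _ => hbasis (e (j, r))
  rw [tribesPoly]
  refine this.trans_eq ?_
  rw [card_univ, card_univ]
  ring

end Tribes

section NodalWeightOn

variable {K ι : Type*} [Field K] [DecidableEq K] [Fintype ι] [DecidableEq ι] {A : Finset K}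
  {T : Finset ι} {a : K}

def nodalWeightOn (A : Finset K) (T : Finset ι) (a : K) (i : ι) (t : K) : K :=
  if i ∈ T then nodalWeight A id t else if t = a then 1 else 0

lemma weightedSum_nodalWeightOn_prod_eq_zero {U : Finset ι} {i : ι} (hA : 2 ≤ #A) (hiT : i ∈ T)
    (hiU : i ∉ U) :
    weightedSum A (nodalWeightOn A T a) (fun x => ∏ j ∈ U, if x j = a then 1 else 0) = 0 := by
  rw [weightedSum_prod_mem A _ U fun _ t => if t = a then 1 else 0, prod_eq_zero (mem_univ i)]
  simp [nodalWeightOn, hiT, hiU, sum_nodalWeight hA]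

lemma weightedSum_nodalWeightOn_one (hA : 2 ≤ #A) (hT : T.Nonempty) :
    weightedSum A (nodalWeightOn A T a) (fun _ => 1) = 0 := by
  obtain ⟨i, hi⟩ := hT
  simpa using weightedSum_nodalWeightOn_prod_eq_zero (U := ∅) (a := a) hA hi (notMem_empty i)

lemma weightedSum_nodalWeightOn_prod_self (ha : a ∈ A) :
    weightedSum A (nodalWeightOn A T a) (fun x => ∏ j ∈ T, if x j = a then 1 else 0) =
      nodalWeight A id a ^ #T := by
  rw [weightedSum_prod_mem A _ T fun _ t => if t = a then 1 else 0]
  have hfactor (j : ι) : ∑ t ∈ A, nodalWeightOn A T a j t *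
      (if j ∈ T then if t = a then 1 else 0 else 1) = if j ∈ T then nodalWeight A id a else 1 := by
    by_cases hj : j ∈ T <;> simp [nodalWeightOn, hj, ha]
  rw [prod_congr rfl fun j _ => hfactor j, prod_ite_mem, univ_inter, prod_const]

end NodalWeightOn

section TribesDegree

variable {K ι κ τ : Type*} [Field K] [DecidableEq K] [Fintype ι] [DecidableEq ι] [Fintype κ]
  [Fintype τ] {A : Finset K} {a : K}

lemma weightedSum_tribes [Nonempty κ] [Nonempty τ] (e : κ × τ ↪ ι) (hA : 2 ≤ #A) (ha : a ∈ A) :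
    weightedSum A (nodalWeightOn A (univ.map e) a) (tribes e a) =
      -((-1) ^ Fintype.card κ * nodalWeight A id a ^ (Fintype.card κ * Fintype.card τ)) := by
  classical
  have hexp : tribes e a = (fun _ => 1) - ∑ S ∈ (univ : Finset κ).powerset,
      ((-1) ^ #S : K) • fun x => ∏ i ∈ (S ×ˢ univ).map e, if x i = a then 1 else 0 := by
    funext x
    simp only [tribes_eq_one_sub_prod, prod_sub, Pi.sub_apply, Finset.sum_apply, Pi.smul_apply,
      smul_eq_mul, prod_map, prod_product, prod_const_one, mul_one]
  rw [hexp, map_sub, map_sum, weightedSum_nodalWeightOn_one hA (by simp), zero_sub,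
    sum_eq_single univ]
  · rw [map_smul, univ_product_univ, weightedSum_nodalWeightOn_prod_self ha, card_map, card_univ,
      card_univ, Fintype.card_prod, smul_eq_mul]
  · intro S _ hS
    obtain ⟨j, hj⟩ : ∃ j, j ∉ S := by
      by_contra! h; exact hS (eq_univ_of_forall h)
    rw [map_smul, weightedSum_nodalWeightOn_prod_eq_zero hA (i := e (j, Classical.arbitrary τ))
      (by simp) (by simp [hj]), smul_zero]
  · simp

lemma le_totalDegree_of_eval_eq_tribes [Nonempty κ] [Nonempty τ] (e : κ × τ ↪ ι) (hA : 2 ≤ #A)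
    (ha : a ∈ A) {p : MvPolynomial ι K} (hp : ∀ x, (∀ i, x i ∈ A) → eval x p = tribes e a x) :
    (#A - 1) * (Fintype.card κ * Fintype.card τ) ≤ p.totalDegree := by
  by_contra! hlt
  have hvanish := weightedSum_eval_eq_zero (W := nodalWeightOn A (univ.map e) a)
    (fun i hi => funext fun t => if_pos hi)
    (by rwa [card_map, card_univ, Fintype.card_prod])
  rw [weightedSum_congr hp, weightedSum_tribes e hA ha] at hvanish
  exact neg_ne_zero.2 (mul_ne_zero (pow_ne_zero _ (by norm_num))
    (pow_ne_zero _ (Lagrange.nodalWeight_ne_zero (Set.injOn_id _) ha))) hvanish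

end TribesDegree

lemma hammingDist_eq_one_iff {ι β : Type*} [Fintype ι] [DecidableEq ι] [DecidableEq β]
    {x y : ι → β} : hammingDist x y = 1 ↔ ∃ i, y i ≠ x i ∧ y = Function.update x i (y i) := by
  rw [hammingDist, card_eq_one]
  constructor
  · rintro ⟨i, hi⟩
    have hdiff (j : ι) : x j ≠ y j ↔ j = i := by simpa using congrArg (j ∈ ·) hi
    refine ⟨i, fun h => (hdiff i).2 rfl h.symm, funext fun j => ?_⟩
    by_cases hj : j = i
    · subst hj; simp
    · rw [Function.update_of_ne hj]; exact (not_not.1 (mt (hdiff j).1 hj)).symm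
  · rintro ⟨i, hi, hy⟩
    refine ⟨i, Finset.ext fun j => ?_⟩
    simp only [mem_filter, mem_univ, true_and, mem_singleton]
    refine ⟨fun hj => by_contra fun hji => hj ?_, fun hj => hj ▸ hi.symm⟩
    rw [hy, Function.update_of_ne hji]

lemma locSens_eq_card {n : ℕ} (A : Finset ℝ) (f : (Fin n → ℝ) → ℝ) {x : Fin n → ℝ}
    (hx : ∀ i, x i ∈ A) :
    locSens A f x = #{p ∈ univ ×ˢ A | p.2 ≠ x p.1 ∧ f (Function.update x p.1 p.2) ≠ f x} := by
  rw [locSens]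
  symm
  refine card_bij (fun p _ => Function.update x p.1 p.2) ?_ ?_ ?_
  · rintro ⟨i, t⟩ hp
    simp only [mem_filter, mem_product, mem_univ, true_and, Fintype.mem_piFinset] at hp ⊢
    refine ⟨fun j => ?_, hammingDist_eq_one_iff.2 ⟨i, by simpa using hp.2.1, by simp⟩, hp.2.2⟩
    rcases eq_or_ne j i with rfl | hj
    · simpa using hp.1
    · simpa [hj] using hx j
  · rintro ⟨i, t⟩ hp ⟨i', t'⟩ - h
    have hii' : i = i' := by
      by_contra hne
      have := congrFun h i
      simp only [Function.update_self, Function.update_of_ne hne] at this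
      exact (mem_filter.1 hp).2.1 this
    subst hii'
    simpa using congrFun h i
  · intro y hy
    simp only [mem_filter, Fintype.mem_piFinset] at hy
    obtain ⟨hyA, hdist, hf⟩ := hy
    obtain ⟨i, hi, hupd⟩ := hammingDist_eq_one_iff.1 hdist
    exact ⟨(i, y i), by simp [hyA i, hi, ← hupd, hf], hupd.symm⟩

section TribesSensitivity

variable {n : ℕ} {κ τ : Type*} [Fintype κ] [Fintype τ] {A : Finset ℝ} {a : ℝ}

lemma locSens_tribes_le_of_eq_one (e : κ × τ ↪ Fin n) (ha : a ∈ A) {x : Fin n → ℝ}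
    (hx : ∀ i, x i ∈ A) (h1 : tribes e a x = 1) :
    locSens A (tribes e a) x ≤ (#A - 1) * Fintype.card τ := by
  obtain ⟨j, hj⟩ := (tribes_eq_one_iff e a x).1 h1
  rw [locSens_eq_card A _ hx]
  calc _ ≤ #((univ.image fun r => e (j, r)) ×ˢ A.erase a) := card_le_card ?_
    _ ≤ (#A - 1) * Fintype.card τ := by
      rw [card_product, card_erase_of_mem ha, mul_comm]
      exact Nat.mul_le_mul_left _ (card_image_le.trans_eq (card_univ))
  rintro ⟨i, t⟩ hp
  simp only [mem_filter, mem_product, mem_univ, true_and] at hp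
  obtain ⟨ht, htx, hsens⟩ := hp
  obtain ⟨r, rfl⟩ : ∃ r, e (j, r) = i := by
    by_contra! hi
    refine hsens (((tribes_eq_one_iff e a _).2 ⟨j, fun r => ?_⟩).trans h1.symm)
    rw [Function.update_of_ne (hi r), hj r]
  simp only [mem_product, mem_image, mem_univ, true_and, mem_erase]
  exact ⟨⟨r, rfl⟩, hj r ▸ htx, ht⟩

lemma locSens_tribes_le_of_ne_one (e : κ × τ ↪ Fin n) {x : Fin n → ℝ} (hx : ∀ i, x i ∈ A)
    (h1 : tribes e a x ≠ 1) : locSens A (tribes e a) x ≤ Fintype.card κ := by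
  have hbroken : ∀ j, ∃ r, x (e (j, r)) ≠ a := by
    simpa [tribes_eq_one_iff] using h1
  -- a sensitive flip completes some block `j`, so it must set `e (j, r j)` to `a`
  choose r hr using hbroken
  rw [locSens_eq_card A _ hx]
  calc _ ≤ #(univ.image fun j => (e (j, r j), a)) := card_le_card ?_
    _ ≤ Fintype.card κ := card_image_le
  rintro ⟨i, t⟩ hp
  simp only [mem_filter, mem_product, mem_univ, true_and] at hp
  obtain ⟨-, -, hsens⟩ := hp
  have hx0 := (tribes_eq_zero_or_eq_one e a x).resolve_right h1
  obtain ⟨j, hj⟩ := (tribes_eq_one_iff e a _).1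
    ((tribes_eq_zero_or_eq_one e a _).resolve_left (hx0 ▸ hsens))
  have hi : e (j, r j) = i := by
    by_contra hne
    exact hr j (by simpa [Function.update_of_ne hne] using hj (r j))
  subst hi
  have ht : t = a := by simpa using hj (r j)
  subst ht
  exact mem_image_of_mem _ (mem_univ j)

lemma le_sens_tribes [Nonempty κ] (e : κ × τ ↪ Fin n) (hA : 2 ≤ #A) (ha : a ∈ A) :
    (#A - 1) * Fintype.card τ ≤ sens A (tribes e a) := by
  obtain ⟨j₀⟩ := ‹Nonempty κ›
  obtain ⟨b, hb, hba⟩ := exists_mem_ne (by omega : 1 < #A) a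
  let x : Fin n → ℝ := fun i => if ∃ r, e (j₀, r) = i then a else b
  have hxA (i : Fin n) : x i ∈ A := by dsimp only [x]; split_ifs <;> assumption
  have hx₀ (r : τ) : x (e (j₀, r)) = a := if_pos ⟨r, rfl⟩
  have hx1 : tribes e a x = 1 := (tribes_eq_one_iff e a x).2 ⟨j₀, hx₀⟩
  refine le_trans ?_ (le_sup (f := locSens A (tribes e a)) (Fintype.mem_piFinset.2 hxA))
  rw [locSens_eq_card A _ hxA]
  calc (#A - 1) * Fintype.card τ = #((univ.image fun r => e (j₀, r)) ×ˢ A.erase a) := by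
        rw [card_product, card_image_of_injective (f := fun r => e (j₀, r)) _
          (e.injective.comp (Prod.mk_right_injective j₀)),
          card_univ, card_erase_of_mem ha, mul_comm]
    _ ≤ _ := card_le_card ?_
  rintro ⟨i, t⟩ hp
  simp only [mem_product, mem_image, mem_univ, true_and, mem_erase] at hp
  obtain ⟨⟨r, rfl⟩, hta, htA⟩ := hp
  simp only [mem_filter, mem_product, mem_univ, true_and]
  refine ⟨htA, hx₀ r ▸ hta, ?_⟩
  rw [hx1, Ne, tribes_eq_one_iff]
  rintro ⟨j, hj⟩
  by_cases hjj₀ : j = j₀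
  · subst hjj₀
    exact hta (by simpa using hj r)
  · have hne : e (j, r) ≠ e (j₀, r) := fun h => hjj₀ (Prod.ext_iff.1 (e.injective h)).1
    have hxb : x (e (j, r)) = b :=
      if_neg fun ⟨r', h⟩ => hjj₀ (Prod.ext_iff.1 (e.injective h)).1.symm
    exact hba (by simpa [Function.update_of_ne hne, hxb] using hj r)

lemma sens_tribes [Nonempty κ] (e : κ × τ ↪ Fin n) (hA : 2 ≤ #A) (ha : a ∈ A)
    (hκ : Fintype.card κ ≤ (#A - 1) * Fintype.card τ) :
    sens A (tribes e a) = (#A - 1) * Fintype.card τ := by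
  refine le_antisymm (Finset.sup_le fun x hx => ?_) (le_sens_tribes e hA ha)
  have hxA := Fintype.mem_piFinset.1 hx
  by_cases h1 : tribes e a x = 1
  · exact locSens_tribes_le_of_eq_one e ha hxA h1
  · exact (locSens_tribes_le_of_ne_one e hxA h1).trans hκ

end TribesSensitivity

lemma fdeg_eq {n : ℕ} {Asets : Fin n → Finset ℝ} {f : (Fin n → ℝ) → ℝ} {d : ℕ}
    {p : MvPolynomial (Fin n) ℝ} (hp : ∀ x, (∀ i, x i ∈ Asets i) → eval x p = f x)
    (hpd : p.totalDegree ≤ d)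
    (hd : ∀ q : MvPolynomial (Fin n) ℝ, (∀ x, (∀ i, x i ∈ Asets i) → eval x q = f x) →
      d ≤ q.totalDegree) :
    fdeg Asets f = d := by
  have hpd' := le_antisymm hpd (hd p hp)
  exact le_antisymm (hpd' ▸ Nat.sInf_le ⟨p, rfl, hp⟩)
    (le_csInf ⟨_, p, rfl, hp⟩ fun k ⟨q, hq, hqf⟩ => hq ▸ hd q hqf)

lemma fdeg_tribes {n : ℕ} {κ τ : Type*} [Fintype κ] [Fintype τ] [Nonempty κ] [Nonempty τ]
    (e : κ × τ ↪ Fin n) {A : Finset ℝ} {a : ℝ} (hA : 2 ≤ #A) (ha : a ∈ A) :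
    fdeg (fun _ => A) (tribes e a) = (#A - 1) * (Fintype.card κ * Fintype.card τ) :=
  fdeg_eq (fun _ hx => eval_tribesPoly e ha hx) (totalDegree_tribesPoly_le e ha)
    fun _ hq => le_totalDegree_of_eval_eq_tribes e hA ha hq

/-- Near-tightness of the sensitivity lower bound: for `A ⊆ ℝ` with `|A| = m ≥ 2`,
`s ≥ 1` and `n ≥ s²`, there is a function `F : Aⁿ → {0,1}` with `deg F = (m-1)s²` and
`s(F) = (m-1)s`; in particular `s(F) = √((m-1)·deg F)`. -/
theorem sensitivity_upper_bound_tight (m s n : ℕ) (A : Finset ℝ) (hA : A.card = m)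
    (hm : 2 ≤ m) (hs : 1 ≤ s) (hn : s ^ 2 ≤ n) :
    ∃ F : (Fin n → ℝ) → ℝ,
      (∀ x : Fin n → ℝ, (∀ i, x i ∈ A) → F x = 0 ∨ F x = 1) ∧
      fdeg (fun _ => A) F = (m - 1) * s ^ 2 ∧
      sens A F = (m - 1) * s := by
  subst hA
  obtain ⟨a, ha⟩ : A.Nonempty := card_pos.1 (by omega)
  have : Nonempty (Fin s) := ⟨⟨0, hs⟩⟩
  let e : Fin s × Fin s ↪ Fin n :=
    finProdFinEquiv.toEmbedding.trans (Fin.castLEEmb (sq s ▸ hn))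
  refine ⟨tribes e a, fun x _ => tribes_eq_zero_or_eq_one e a x, ?_, ?_⟩
  · rw [fdeg_tribes e hm ha, Fintype.card_fin, sq]
  · rw [sens_tribes e hm ha (by simpa using Nat.le_mul_of_pos_left s (by omega)), Fintype.card_fin]
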